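/- arXiv:2204.13552 — 3 statements merged into one kernel-verified Lean document; each statement's English description precedes it below -/
import Mathlib

section
/- Let h : ℝ → ℝ be differentiable with h'(y) ≥ c for all y ∈ ℝ, for some constant c > 0. Let (Ω, 𝔽, P) be a probability space, ν a finite Borel measure on (0,1), σ¹, σ² : (0,1) → ℝ measurable with |σ¹(p)| ≤ 1 and |σ²(p)| ≤ 1 for ν-a.e. p, x ∈ ℝ^q, and β : (0,1) → ℝ^q ν-integrable; let β̂ₙ : Ω × (0,1) → ℝ^q be jointly measurable with β̂ₙ(ω,·) ν-integrable for P-a.e. ω. Define T¹ = ∫₀¹ h⁻¹(⟨x, β(p)⟩) σ¹(p) dν(p) and T² = ∫₀¹ h⁻¹(⟨x, β(p)⟩) σ²(p) dν(p), and assume T² ≠ 0. If for every ε > 0, P(∫₀¹ ‖β̂ₙ(ω,p) − β(p)‖ dν(p) > ε) → 0 as n → ∞, then the ratio estimator θ̂ₙ(ω) = (∫₀¹ h⁻¹(⟨x, β̂ₙ(ω,p)⟩) σ¹(p) dν(p)) / (∫₀¹ h⁻¹(⟨x, β̂ₙ(ω,p)⟩) σ²(p) dν(p)) converges in probability to θ(x)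 = T¹/T². -/
open MeasureTheory Filter
open scoped NNReal Topology

/-!
Since `h' ≥ c > 0`, the link `h` is a surjective map with `c * |a - b| ≤ |h a - h b|`, so its
inverse `Function.invFun h` is `c⁻¹`-Lipschitz. With weights bounded by `1`, each L-functional
`β ↦ ∫ h⁻¹ ⟨x, β p⟩ σ p dν` is then Lipschitz for the `L¹(ν)` distance, so the plug-in numerator
and denominator converge in probability; the ratio follows by the continuous mapping theorem at a
point with nonzero denominator.
-/

section LinkFunction

variable {h : ℝ → ℝ} {c : ℝ}

lemma antilipschitzWith_of_le_deriv (hc : 0 < c) (hdiff : Differentiable ℝ h)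
    (hderiv : ∀ y, c ≤ deriv h y) : AntilipschitzWith (Real.toNNReal c⁻¹) h := by
  refine AntilipschitzWith.of_le_mul_dist fun a b => ?_
  have hgrowth : c * |a - b| ≤ |h a - h b| := by
    wlog hab : a ≤ b generalizing a b
    · simpa only [abs_sub_comm] using this b a (le_of_not_ge hab)
    calc c * |a - b| = c * (b - a) := by rw [abs_sub_comm, abs_of_nonneg (sub_nonneg.2 hab)]
      _ ≤ h b - h a := mul_sub_le_image_sub_of_le_deriv hdiff hderiv hab
      _ ≤ |h a - h b| := by rw [abs_sub_comm]; exact le_abs_self _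
  rw [Real.dist_eq, Real.dist_eq, Real.coe_toNNReal _ (inv_nonneg.2 hc.le),
    inv_mul_eq_div, le_div_iff₀ hc, mul_comm]
  exact hgrowth

lemma surjective_of_le_deriv (hc : 0 < c) (hdiff : Differentiable ℝ h)
    (hderiv : ∀ y, c ≤ deriv h y) : Function.Surjective h := by
  refine hdiff.continuous.surjective ?_ ?_
  · refine tendsto_atTop_mono' atTop ?_
      (tendsto_atTop_add_const_right _ (h 0) (tendsto_id.const_mul_atTop hc))
    filter_upwards [eventually_ge_atTop 0] with y hy
    rw [id]
    linarith [mul_sub_le_image_sub_of_le_deriv hdiff hderiv hy]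
  · refine tendsto_atBot_mono' atBot ?_
      (tendsto_atBot_add_const_right _ (h 0) (tendsto_id.const_mul_atBot hc))
    filter_upwards [eventually_le_atBot 0] with y hy
    rw [id]
    linarith [mul_sub_le_image_sub_of_le_deriv hdiff hderiv hy]

lemma lipschitzWith_invFun_of_le_deriv (hc : 0 < c) (hdiff : Differentiable ℝ h)
    (hderiv : ∀ y, c ≤ deriv h y) :
    LipschitzWith (Real.toNNReal c⁻¹) (Function.invFun h) :=
  (antilipschitzWith_of_le_deriv hc hdiff hderiv).to_rightInverse
    (Function.rightInverse_invFun (surjective_of_le_deriv hc hdiff hderiv))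

end LinkFunction

section WeightedIntegral

variable {α E : Type*} [MeasurableSpace α] {ν : Measure α} [IsFiniteMeasure ν]
  [NormedAddCommGroup E] {F : E → ℝ} {K : ℝ≥0} {σ : α → ℝ} {β γ : α → E}

lemma LipschitzWith.integrable_comp_mul (hF : LipschitzWith K F)
    (hσ : AEStronglyMeasurable σ ν) (hσ1 : ∀ᵐ p ∂ν, |σ p| ≤ 1) (hγ : Integrable γ ν) :
    Integrable (fun p => F (γ p) * σ p) ν := by
  have hFγ : Integrable (fun p => F (γ p)) ν := by
    refine ((integrable_const ‖F 0‖).add (hγ.norm.const_mul K)).mono'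
      (hF.continuous.comp_aestronglyMeasurable hγ.1) (Eventually.of_forall fun p => ?_)
    calc ‖F (γ p)‖ ≤ ‖F 0‖ + ‖F (γ p) - F 0‖ := norm_le_insert' _ _
      _ ≤ ‖F 0‖ + K * ‖γ p - 0‖ := by gcongr; exact hF.norm_sub_le _ _
      _ = ‖F 0‖ + K * ‖γ p‖ := by rw [sub_zero]
  exact hFγ.mul_bdd hσ hσ1

lemma LipschitzWith.dist_integral_comp_mul_le (hF : LipschitzWith K F)
    (hσ : AEStronglyMeasurable σ ν) (hσ1 : ∀ᵐ p ∂ν, |σ p| ≤ 1)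
    (hγ : Integrable γ ν) (hβ : Integrable β ν) :
    dist (∫ p, F (γ p) * σ p ∂ν) (∫ p, F (β p) * σ p ∂ν) ≤ K * ∫ p, ‖γ p - β p‖ ∂ν := by
  rw [dist_eq_norm, ← integral_sub (hF.integrable_comp_mul hσ hσ1 hγ)
    (hF.integrable_comp_mul hσ hσ1 hβ), ← integral_const_mul]
  refine norm_integral_le_of_norm_le ((hγ.sub hβ).norm.const_mul _) ?_
  filter_upwards [hσ1] with p hp
  calc ‖F (γ p) * σ p - F (β p) * σ p‖ = ‖F (γ p) - F (β p)‖ * |σ p| := by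
        rw [← sub_mul, norm_mul, Real.norm_eq_abs (σ p)]
    _ ≤ K * ‖γ p - β p‖ * 1 := by
        gcongr
        exact hF.norm_sub_le _ _
    _ = K * ‖γ p - β p‖ := mul_one _

end WeightedIntegral

namespace MeasureTheory

variable {Ω ι X Y : Type*} [MeasurableSpace Ω] {P : Measure Ω} {l : Filter ι}
  [PseudoMetricSpace X] [PseudoMetricSpace Y]

lemma tendstoInMeasure_const_of_ae_dist_le {f : ι → Ω → X} {x : X} {D : ι → Ω → ℝ}
    {K : ℝ≥0} (hD : ∀ ε : ℝ, 0 < ε → Tendsto (fun i => P {ω | ε < D i ω}) l (𝓝 0))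
    (hfD : ∀ i, ∀ᵐ ω ∂P, dist (f i ω) x ≤ K * D i ω) :
    TendstoInMeasure P f l (fun _ => x) := by
  rw [tendstoInMeasure_iff_dist]
  intro ε hε
  refine tendsto_of_tendsto_of_tendsto_of_le_of_le tendsto_const_nhds
    (hD (ε / (K + 1)) (by positivity)) (fun _ => zero_le) (fun i => measure_mono_ae ?_)
  filter_upwards [hfD i] with ω hω (hεω : ε ≤ dist (f i ω) x)
  show ε / (K + 1) < D i ω
  rw [div_lt_iff₀ (by positivity)]
  nlinarith [K.coe_nonneg]

lemma TendstoInMeasure.prodMk {f : ι → Ω → X} {g : ι → Ω → Y} {f' : Ω → X} {g' : Ω → Y}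
    (hf : TendstoInMeasure P f l f') (hg : TendstoInMeasure P g l g') :
    TendstoInMeasure P (fun i ω => (f i ω, g i ω)) l (fun ω => (f' ω, g' ω)) := by
  rw [tendstoInMeasure_iff_dist] at *
  intro ε hε
  refine tendsto_of_tendsto_of_tendsto_of_le_of_le tendsto_const_nhds
    (by simpa using (hf ε hε).add (hg ε hε)) (fun _ => zero_le) (fun i => ?_)
  refine (measure_mono fun ω (hω : ε ≤ dist (f i ω, g i ω) (f' ω, g' ω)) => ?_).trans
    (measure_union_le _ _)
  rwa [Prod.dist_eq, le_max_iff] at hω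

lemma TendstoInMeasure.comp_continuousAt_const {f : ι → Ω → X} {x : X} {g : X → Y}
    (hf : TendstoInMeasure P f l (fun _ => x)) (hg : ContinuousAt g x) :
    TendstoInMeasure P (fun i ω => g (f i ω)) l (fun _ => g x) := by
  rw [tendstoInMeasure_iff_dist] at *
  intro ε hε
  obtain ⟨δ, hδ, hgδ⟩ := Metric.continuousAt_iff.1 hg ε hε
  refine tendsto_of_tendsto_of_tendsto_of_le_of_le tendsto_const_nhds (hf δ hδ)
    (fun _ => zero_le) (fun i => measure_mono fun ω hω => ?_)
  exact not_lt.1 fun hnear => (hgδ hnear).not_ge hω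

end MeasureTheory

theorem stmt_6_general {q : ℕ} {Ω : Type*} [MeasurableSpace Ω]
    (P : Measure Ω)
    (h : ℝ → ℝ) (c : ℝ) (hc : 0 < c)
    (hdiff : Differentiable ℝ h) (hderiv : ∀ y : ℝ, c ≤ deriv h y)
    (ν : Measure (Set.Ioo (0:ℝ) 1)) [IsFiniteMeasure ν]
    (σ1 σ2 : Set.Ioo (0:ℝ) 1 → ℝ)
    (hσ1meas : Measurable σ1) (hσ2meas : Measurable σ2)
    (hσ1 : ∀ᵐ p ∂ν, |σ1 p| ≤ 1) (hσ2 : ∀ᵐ p ∂ν, |σ2 p| ≤ 1)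
    (x : EuclideanSpace ℝ (Fin q))
    (β : Set.Ioo (0:ℝ) 1 → EuclideanSpace ℝ (Fin q)) (hβ : Integrable β ν)
    (βhat : ℕ → Ω × Set.Ioo (0:ℝ) 1 → EuclideanSpace ℝ (Fin q))
    (hβhatint : ∀ n, ∀ᵐ ω ∂P, Integrable (fun p => βhat n (ω, p)) ν)
    (hT2 : (∫ p, Function.invFun h ((inner ℝ x (β p) : ℝ)) * σ2 p ∂ν) ≠ 0)
    (hcons : ∀ ε : ℝ, 0 < ε →
      Tendsto (fun n => P {ω | ε < ∫ p, ‖βhat n (ω, p) - β p‖ ∂ν})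
        atTop (nhds 0)) :
    TendstoInMeasure P
      (fun n ω =>
        (∫ p, Function.invFun h ((inner ℝ x (βhat n (ω, p)) : ℝ)) * σ1 p ∂ν) /
        (∫ p, Function.invFun h ((inner ℝ x (βhat n (ω, p)) : ℝ)) * σ2 p ∂ν))
      atTop
      (fun _ =>
        (∫ p, Function.invFun h ((inner ℝ x (β p) : ℝ)) * σ1 p ∂ν) /
        (∫ p, Function.invFun h ((inner ℝ x (β p) : ℝ)) * σ2 p ∂ν)) := by
  have hlip : LipschitzWith (Real.toNNReal c⁻¹ * ‖innerSL ℝ x‖₊)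
      (fun v => Function.invFun h (inner ℝ x v)) :=
    (lipschitzWith_invFun_of_le_deriv hc hdiff hderiv).comp (innerSL ℝ x).lipschitz
  have hconv : ∀ σ : Set.Ioo (0:ℝ) 1 → ℝ, Measurable σ → (∀ᵐ p ∂ν, |σ p| ≤ 1) →
      TendstoInMeasure P
        (fun n ω => ∫ p, Function.invFun h (inner ℝ x (βhat n (ω, p))) * σ p ∂ν) atTop
        (fun _ => ∫ p, Function.invFun h (inner ℝ x (β p)) * σ p ∂ν) :=
    fun σ hσmeas hσ => tendstoInMeasure_const_of_ae_dist_le hcons fun n => by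
      filter_upwards [hβhatint n] with ω hω
      exact hlip.dist_integral_comp_mul_le hσmeas.aestronglyMeasurable hσ hω hβ
  exact ((hconv σ1 hσ1meas hσ1).prodMk (hconv σ2 hσ2meas hσ2)).comp_continuousAt_const
    (continuousAt_fst.div continuousAt_snd hT2)

/-- Consistency part of Corollary 2 of the paper: consistency of the plug-in
estimator of a ratio of two conditional L-functionals in a transformed linear
quantile regression model with link function h. -/
theorem stmt_6 {q : ℕ} {Ω : Type*} [MeasurableSpace Ω]
    (P : Measure Ω) [IsProbabilityMeasure P]
    (h : ℝ → ℝ) (c : ℝ) (hc : 0 < c)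
    (hdiff : Differentiable ℝ h) (hderiv : ∀ y : ℝ, c ≤ deriv h y)
    (ν : Measure (Set.Ioo (0:ℝ) 1)) [IsFiniteMeasure ν]
    (σ1 σ2 : Set.Ioo (0:ℝ) 1 → ℝ)
    (hσ1meas : Measurable σ1) (hσ2meas : Measurable σ2)
    (hσ1 : ∀ᵐ p ∂ν, |σ1 p| ≤ 1) (hσ2 : ∀ᵐ p ∂ν, |σ2 p| ≤ 1)
    (x : EuclideanSpace ℝ (Fin q))
    (β : Set.Ioo (0:ℝ) 1 → EuclideanSpace ℝ (Fin q)) (hβ : Integrable β ν)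
    (βhat : ℕ → Ω × Set.Ioo (0:ℝ) 1 → EuclideanSpace ℝ (Fin q))
    (hβhatmeas : ∀ n, Measurable (βhat n))
    (hβhatint : ∀ n, ∀ᵐ ω ∂P, Integrable (fun p => βhat n (ω, p)) ν)
    (hT2 : (∫ p, Function.invFun h ((inner ℝ x (β p) : ℝ)) * σ2 p ∂ν) ≠ 0)
    (hcons : ∀ ε : ℝ, 0 < ε →
      Tendsto (fun n => P {ω | ε < ∫ p, ‖βhat n (ω, p) - β p‖ ∂ν})
        atTop (nhds 0)) :
    TendstoInMeasure P
      (fun n ω =>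
        (∫ p, Function.invFun h ((inner ℝ x (βhat n (ω, p)) : ℝ)) * σ1 p ∂ν) /
        (∫ p, Function.invFun h ((inner ℝ x (βhat n (ω, p)) : ℝ)) * σ2 p ∂ν))
      atTop
      (fun _ =>
        (∫ p, Function.invFun h ((inner ℝ x (β p) : ℝ)) * σ1 p ∂ν) /
        (∫ p, Function.invFun h ((inner ℝ x (β p) : ℝ)) * σ2 p ∂ν)) :=
  stmt_6_general P h c hc hdiff hderiv ν σ1 σ2 hσ1meas hσ2meas hσ1 hσ2 x β hβ βhat hβhatint hT2
    hcons
end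

section
/- Let g : (0,1) → ℝ satisfy g(1−p) = −g(p) for all p ∈ (0,1) and g(p) ≥ 0 for all p ∈ (1/2, 1). Let Q₁, Q₂ : (0,1) → ℝ be such that Q₁·g and Q₂·g are Lebesgue-integrable on (0,1), and suppose the difference Q₂ − Q₁ is nondecreasing on (0,1) (i.e., the distribution with quantile function Q₂ is at least as spread out as that with quantile function Q₁). Then ∫₀¹ Q₁(p) g(p) dp ≤ ∫₀¹ Q₂(p) g(p) dp; that is, scale L-functionals preserve the spread ordering of Bickel and Lehmann. -/
/-!
Folding (0,1) at its midpoint, skew-symmetry of g turns ∫₀¹ (Q₂ - Q₁) g into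
∫_{1/2}^1 (D p - D (1 - p)) g p dp with D = Q₂ - Q₁, and the integrand is a product of
two nonnegative factors because D is nondecreasing and g ≥ 0 on (1/2, 1).
-/

open MeasureTheory Filter

theorem intervalIntegral.integral_eq_integral_reflect_add {f : ℝ → ℝ} {a b : ℝ} (hab : a ≤ b)
    (hf : IntervalIntegrable f volume a b) :
    ∫ x in a..b, f x = ∫ x in (a + b) / 2..b, (f (a + b - x) + f x) := by
  have hm : a + b - (a + b) / 2 = (a + b) / 2 := by ring
  have hlow : IntervalIntegrable f volume a ((a + b) / 2) :=
    hf.mono_set (Set.uIcc_subset_uIcc_left (Set.mem_uIcc_of_le (by linarith) (by linarith)))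
  have hupp : IntervalIntegrable f volume ((a + b) / 2) b :=
    hf.mono_set (Set.uIcc_subset_uIcc_right (Set.mem_uIcc_of_le (by linarith) (by linarith)))
  have hreflect : IntervalIntegrable (fun x => f (a + b - x)) volume ((a + b) / 2) b := by
    simpa [hm] using (hlow.comp_sub_left (a + b)).symm
  rw [intervalIntegral.integral_add hreflect hupp, intervalIntegral.integral_comp_sub_left,
    add_sub_cancel_right, hm, intervalIntegral.integral_add_adjacent_intervals hlow hupp]

theorem reflect_mul_add_mul_nonneg {g D : ℝ → ℝ} {a b : ℝ}
    (hg : ∀ p ∈ Set.Ioo a b, g (a + b - p) = -g p)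
    (hgpos : ∀ p ∈ Set.Ioo ((a + b) / 2) b, 0 ≤ g p)
    (hD : MonotoneOn D (Set.Ioo a b)) {p : ℝ} (hp : p ∈ Set.Ioo ((a + b) / 2) b) :
    0 ≤ D (a + b - p) * g (a + b - p) + D p * g p := by
  obtain ⟨hmp, hpb⟩ := hp
  have hp' : p ∈ Set.Ioo a b := ⟨by linarith, hpb⟩
  have hDp : D (a + b - p) ≤ D p := hD ⟨by linarith, by linarith⟩ hp' (by linarith)
  rw [hg p hp', show D (a + b - p) * -g p + D p * g p = (D p - D (a + b - p)) * g p by ring]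
  exact mul_nonneg (sub_nonneg.mpr hDp) (hgpos p ⟨hmp, hpb⟩)

theorem setIntegral_mul_skew_nonneg {g D : ℝ → ℝ} {a b : ℝ} (hab : a ≤ b)
    (hg : ∀ p ∈ Set.Ioo a b, g (a + b - p) = -g p)
    (hgpos : ∀ p ∈ Set.Ioo ((a + b) / 2) b, 0 ≤ g p)
    (hD : MonotoneOn D (Set.Ioo a b))
    (hDg : IntegrableOn (fun p => D p * g p) (Set.Ioo a b)) :
    0 ≤ ∫ p in Set.Ioo a b, D p * g p := by
  have hmb : (a + b) / 2 ≤ b := by linarith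
  rw [← integral_Ioc_eq_integral_Ioo, ← intervalIntegral.integral_of_le hab,
    intervalIntegral.integral_eq_integral_reflect_add hab
      ((intervalIntegrable_iff_integrableOn_Ioo_of_le hab).mpr hDg),
    intervalIntegral.integral_of_le hmb, integral_Ioc_eq_integral_Ioo]
  exact setIntegral_nonneg measurableSet_Ioo fun p hp => reflect_mul_add_mul_nonneg hg hgpos hD hp

/-- Scale L-functionals preserve the spread ordering of Bickel and Lehmann:
if g is skew-symmetric and nonnegative on (1/2,1), and Q₂ − Q₁ is nondecreasing,
then ∫₀¹ Q₁ g ≤ ∫₀¹ Q₂ g. -/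
theorem stmt_11 (g Q₁ Q₂ : ℝ → ℝ)
    (hg : ∀ p ∈ Set.Ioo (0:ℝ) 1, g (1 - p) = -g p)
    (hgpos : ∀ p ∈ Set.Ioo (1/2 : ℝ) 1, 0 ≤ g p)
    (hQ1g : IntegrableOn (fun p => Q₁ p * g p) (Set.Ioo 0 1))
    (hQ2g : IntegrableOn (fun p => Q₂ p * g p) (Set.Ioo 0 1))
    (hspread : MonotoneOn (fun p => Q₂ p - Q₁ p) (Set.Ioo (0:ℝ) 1)) :
    (∫ p in Set.Ioo (0:ℝ) 1, Q₁ p * g p)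
      ≤ ∫ p in Set.Ioo (0:ℝ) 1, Q₂ p * g p := by
  have hdiff : IntegrableOn (fun p => (Q₂ p - Q₁ p) * g p) (Set.Ioo 0 1) := by
    simpa only [sub_mul] using
      (hQ2g.sub hQ1g : IntegrableOn (fun p => Q₂ p * g p - Q₁ p * g p) _)
  have hnonneg := setIntegral_mul_skew_nonneg zero_le_one (by simpa using hg)
    (by simpa using hgpos) hspread hdiff
  simp only [sub_mul] at hnonneg
  rw [integral_sub hQ2g hQ1g] at hnonneg
  exact sub_nonneg.mp hnonneg
end

section
/- Let g : (0,1) → ℝ be Lebesgue-integrable with g(1−p) = g(p) for all p ∈ (0,1) and ∫₀¹ g(p) dp = 0. Let Q : (0,1) → ℝ be such that Q·g is Lebesgue-integrable on (0,1). Then ∫₀¹ Q(p) g(p) dp = ∫_{1/2}^{1} [Q(p) + Q(1−p) − 2Q(1/2)] g(p) dp; that is, the unstandardized skewness functional is a weighted integral of the quantile-based skewness contrasts Q(p) + Q(1−p) − 2Q(1/2). -/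
/-! Since `∫ g = 0`, replacing `Q` by `Q - Q(1/2)` does not change `∫ Q g`. Folding `(0, 1)` at
`1/2` by `p ↦ 1 - p` and using `g (1 - p) = g p` then pairs `Q p - Q(1/2)` with
`Q (1 - p) - Q(1/2)` on `(1/2, 1)`. -/

open MeasureTheory Set

theorem intervalIntegral.integral_eq_integral_add_reflect {f : ℝ → ℝ} {a b : ℝ}
    (hab : a ≤ b) (hf : IntervalIntegrable f volume a b) :
    ∫ x in a..b, f x = ∫ x in (a + b) / 2..b, (f x + f (a + b - x)) := by
  have hm : (a + b) / 2 ∈ uIcc a b := by rw [uIcc_of_le hab]; constructor <;> linarith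
  have hleft : IntervalIntegrable f volume a ((a + b) / 2) :=
    hf.mono_set (uIcc_subset_uIcc_left hm)
  have hright : IntervalIntegrable f volume ((a + b) / 2) b :=
    hf.mono_set (uIcc_subset_uIcc_right hm)
  have hreflect : ∫ x in (a + b) / 2..b, f (a + b - x) = ∫ x in a..(a + b) / 2, f x := by
    rw [intervalIntegral.integral_comp_sub_left, add_sub_cancel_right,
      show a + b - (a + b) / 2 = (a + b) / 2 by ring]
  have hreflect_int : IntervalIntegrable (fun x => f (a + b - x)) volume ((a + b) / 2) b := by
    simpa only [add_sub_cancel_left, show a + b - (a + b) / 2 = (a + b) / 2 by ring] using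
      (hleft.comp_sub_left (a + b)).symm
  rw [intervalIntegral.integral_add hright hreflect_int, hreflect, add_comm,
    intervalIntegral.integral_add_adjacent_intervals hleft hright]

theorem setIntegral_Ioo_eq_integral_add_reflect {f : ℝ → ℝ} {a b : ℝ} (hab : a ≤ b)
    (hf : IntegrableOn f (Ioo a b)) :
    ∫ x in Ioo a b, f x = ∫ x in Ioo ((a + b) / 2) b, (f x + f (a + b - x)) := by
  have hmb : (a + b) / 2 ≤ b := by linarith
  simpa only [intervalIntegral.integral_of_le hab, intervalIntegral.integral_of_le hmb,
    integral_Ioc_eq_integral_Ioo] using intervalIntegral.integral_eq_integral_add_reflect hab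
      ((intervalIntegrable_iff_integrableOn_Ioo_of_le hab).2 hf)

/-- Identity (44) of the paper: for a symmetric weight density g integrating to
zero, the unstandardized skewness functional ∫₀¹ Q(p) g(p) dp equals the
weighted integral of the skewness contrasts Q(p) + Q(1−p) − 2Q(1/2) over
p ∈ (1/2, 1). -/
theorem stmt_12 (g Q : ℝ → ℝ)
    (hgint : IntegrableOn g (Set.Ioo 0 1))
    (hgsymm : ∀ p ∈ Set.Ioo (0:ℝ) 1, g (1 - p) = g p)
    (hgzero : (∫ p in Set.Ioo (0:ℝ) 1, g p) = 0)
    (hQg : IntegrableOn (fun p => Q p * g p) (Set.Ioo 0 1)) :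
    (∫ p in Set.Ioo (0:ℝ) 1, Q p * g p)
      = ∫ p in Set.Ioo (1/2 : ℝ) 1, (Q p + Q (1 - p) - 2 * Q (1/2)) * g p := by
  set c := Q (1 / 2)
  have hcentered : IntegrableOn (fun p => (Q p - c) * g p) (Ioo 0 1) := by
    simp only [sub_mul]
    exact hQg.sub (hgint.const_mul c)
  calc (∫ p in Ioo (0:ℝ) 1, Q p * g p)
      = ∫ p in Ioo (0:ℝ) 1, (Q p - c) * g p := by
        simp only [sub_mul]
        rw [integral_sub hQg (hgint.const_mul c), integral_const_mul, hgzero, mul_zero, sub_zero]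
    _ = ∫ p in Ioo (1/2 : ℝ) 1, ((Q p - c) * g p + (Q (1 - p) - c) * g (1 - p)) := by
        simpa only [zero_add] using setIntegral_Ioo_eq_integral_add_reflect zero_le_one hcentered
    _ = ∫ p in Ioo (1/2 : ℝ) 1, (Q p + Q (1 - p) - 2 * c) * g p := by
        refine setIntegral_congr_fun measurableSet_Ioo fun p hp => ?_
        rw [hgsymm p (Ioo_subset_Ioo (by norm_num) le_rfl hp)]
        ring
end
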